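/- arXiv:2001.04728 — 2 statements merged into one kernel-verified Lean document; each statement's English description precedes it below -/
import Mathlib

section
/- Let D be a nontrivial 2-(v,k,2) design with replication number r, let G ≤ Aut(D) be flag-transitive, and let X be a normal subgroup of G that is isomorphic to PSL(n,q) (n ≥ 3, q = p^f) and acts transitively on the point set P; set d = gcd(n,q−1) and suppose the index [G:X] divides 2df (as holds when G ≤ Aut(X), since |Out(PSL(n,q))| = 2df for n ≥ 3). Then for any point α: (i) |X| < 2(df)²|X_α|³; (ii) r divides 2df|X_α|; and (iii) if p divides v, then the p-part r_p of r divides 2, r divides 2df·|X_α|_{p'}, and |X| < 2(df)²·|X_α|_{p'}²·|X_α|. -/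
/-- The set `Bs` of blocks forms a `2`-`(v, k, lam)` design on the point set `P`:
there are `v` points, every block is a `k`-element subset of `P`, and any two
distinct points lie in exactly `lam` common blocks. -/
def IsTwoDesign (v k lam : ℕ) (P : Type*) (Bs : Set (Set P)) : Prop :=
  Nat.card P = v ∧
  (∀ B ∈ Bs, Nat.card B = k) ∧
  ∀ x y : P, x ≠ y → Nat.card {B : Set P | B ∈ Bs ∧ x ∈ B ∧ y ∈ B} = lam

/-- Every point lies on exactly `r` blocks (`r` is the replication number). -/
def HasReplication {P : Type*} (Bs : Set (Set P)) (r : ℕ) : Prop :=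
  ∀ x : P, Nat.card {B : Set P | B ∈ Bs ∧ x ∈ B} = r

/-- Every element of `G` is an automorphism of the design with block set `Bs`. -/
def IsAutomGroup {P : Type*} (G : Subgroup (Equiv.Perm P)) (Bs : Set (Set P)) : Prop :=
  ∀ g ∈ G, ∀ B ∈ Bs, (⇑g) '' B ∈ Bs

/-- `G` is transitive on the flags (incident point-block pairs) of the design. -/
def IsFlagTransitive {P : Type*} (G : Subgroup (Equiv.Perm P)) (Bs : Set (Set P)) : Prop :=
  ∀ B₁ ∈ Bs, ∀ B₂ ∈ Bs, ∀ x₁ ∈ B₁, ∀ x₂ ∈ B₂,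
    ∃ g ∈ G, (⇑g) '' B₁ = B₂ ∧ g x₁ = x₂

/-- The stabilizer in `G` of the point `α`. -/
def pointStab {P : Type*} (G : Subgroup (Equiv.Perm P)) (α : P) : Subgroup (Equiv.Perm P) :=
  G ⊓ MulAction.stabilizer (Equiv.Perm P) α

open scoped MatrixGroups

/-!
The stabilizer `G_α` permutes the `r` blocks through `α` transitively (flag-transitivity), so
`r ∣ |G_α|`; and `G_α / X_α` embeds in `G / X`, so `|G_α| ∣ [G : X] |X_α|`. Hence
`r ∣ 2df |X_α|`. Fisher's inequality `v ≤ b` gives `k ≤ r`, which together with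
`r (k - 1) = 2 (v - 1)` yields `2v < r²`; since `X` is point-transitive, `|X| = v |X_α|`, and the
bounds on `|X|` follow. When `p ∣ v`, the relation `r ∣ 2 (v - 1)` with `v - 1` prime to `p`
forces `r_p ∣ 2`, so the `p`-part of `|X_α|` can be dropped from `r ∣ 2df |X_α|`.
-/

section Design

open Finset Matrix

variable {P : Type*} {Bs : Set (Set P)} {v k lam r : ℕ}

lemma natCard_setOf_mem_and_eq_card_filter [Fintype Bs] (q : Set P → Prop) [DecidablePred q] :
    Nat.card {B | B ∈ Bs ∧ q B} = #{B : Bs | q B} := by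
  rw [← Fintype.card_subtype, ← Nat.card_eq_fintype_card]
  exact Nat.card_congr (Equiv.subtypeSubtypeEquivSubtypeInter (· ∈ Bs) q).symm

noncomputable def incidenceMatrix (Bs : Set (Set P)) : Matrix P Bs ℝ :=
  Matrix.of fun x B => (B : Set P).indicator 1 x

open Classical in
theorem IsTwoDesign.incidenceMatrix_mul_transpose [Fintype P] [Fintype Bs]
    (hD : IsTwoDesign v k lam P Bs) (hr : HasReplication Bs r) :
    incidenceMatrix Bs * (incidenceMatrix Bs)ᵀ =
      ((r : ℝ) - lam) • 1 + (lam : ℝ) • Matrix.of fun _ _ => 1 := by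
  ext x y
  have hxy : (incidenceMatrix Bs * (incidenceMatrix Bs)ᵀ) x y =
      Nat.card {B | B ∈ Bs ∧ x ∈ B ∧ y ∈ B} := by
    rw [natCard_setOf_mem_and_eq_card_filter (fun B => x ∈ B ∧ y ∈ B), card_filter]
    push_cast
    simp only [incidenceMatrix, mul_apply, transpose_apply, of_apply, Set.indicator_apply,
      Pi.one_apply, ite_mul, one_mul, zero_mul, ite_and]
  rw [hxy]
  rcases eq_or_ne x y with rfl | hne
  · simpa using hr x
  · rw [hD.2.2 x y hne]
    simp [one_apply_ne hne]

variable [Finite P]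

open Classical in
theorem IsTwoDesign.card_blocks_mul (hD : IsTwoDesign v k lam P Bs) (hr : HasReplication Bs r) :
    Nat.card Bs * k = v * r := by
  cases nonempty_fintype P
  cases nonempty_fintype Bs
  have := card_mul_eq_card_mul (s := univ) (t := univ) (fun (B : Bs) (x : P) => x ∈ (B : Set P))
    (m := k) (n := r) ?_ ?_
  · simpa [← hD.1, Nat.card_eq_fintype_card] using this
  · intro B _
    rw [← hD.2.1 B B.2, Nat.card_eq_fintype_card, Fintype.card_subtype]
    rfl
  · intro x _
    rw [← hr x, natCard_setOf_mem_and_eq_card_filter]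
    rfl

open Classical in
theorem IsTwoDesign.replication_mul (hD : IsTwoDesign v k lam P Bs) (hr : HasReplication Bs r)
    (α : P) : r * (k - 1) = lam * (v - 1) := by
  cases nonempty_fintype P
  cases nonempty_fintype Bs
  have := card_mul_eq_card_mul (s := {B : Bs | α ∈ (B : Set P)}) (t := univ.erase α)
    (fun (B : Bs) (x : P) => x ∈ (B : Set P)) (m := k - 1) (n := lam) ?_ ?_
  · rw [← natCard_setOf_mem_and_eq_card_filter (α ∈ ·), hr α, card_erase_of_mem (mem_univ α),
      card_univ, ← Nat.card_eq_fintype_card, hD.1] at this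
    rw [this, mul_comm]
  · intro B hB
    rw [mem_filter] at hB
    rw [bipartiteAbove, filter_erase, card_erase_of_mem (by simpa using hB.2), ← hD.2.1 B B.2,
      Nat.card_eq_fintype_card, Fintype.card_subtype]
  · intro y hy
    rw [mem_erase] at hy
    rw [← hD.2.2 α y (Ne.symm hy.1), natCard_setOf_mem_and_eq_card_filter, bipartiteBelow,
      filter_filter]

/-- Fisher's inequality. -/
theorem IsTwoDesign.le_card_blocks (hD : IsTwoDesign v k lam P Bs) (hr : HasReplication Bs r)
    (hlr : lam < r) : v ≤ Nat.card Bs := by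
  classical
  cases nonempty_fintype P
  cases nonempty_fintype Bs
  set N := incidenceMatrix Bs
  have hpos : (N * Nᵀ).PosDef := by
    rw [hD.incidenceMatrix_mul_transpose hr]
    refine PosDef.one.smul (by simpa using hlr) |>.add_posSemidef
      (PosSemidef.smul ?_ (Nat.cast_nonneg lam))
    convert posSemidef_vecMulVec_self_star (1 : P → ℝ)
    ext; simp
  calc v = Fintype.card P := by rw [← hD.1, Nat.card_eq_fintype_card]
    _ = (N * Nᵀ).rank := (rank_of_isUnit _ hpos.isUnit).symm
    _ ≤ N.rank := rank_mul_le_left _ _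
    _ ≤ Nat.card Bs := Nat.card_eq_fintype_card (α := Bs) ▸ N.rank_le_card_width

theorem IsTwoDesign.lt_replication (hD : IsTwoDesign v k lam P Bs) (hr : HasReplication Bs r)
    (hlam : 0 < lam) (hk : 1 < k) (hkv : k < v) : lam < r := by
  have : Nonempty P := Nat.card_pos_iff.mp (hD.1 ▸ by omega) |>.1
  have hrk := hD.replication_mul hr (Classical.arbitrary P)
  by_contra! hrl
  have : r * (k - 1) ≤ lam * (k - 1) := Nat.mul_le_mul_right _ hrl
  have : lam * (k - 1) < lam * (v - 1) := Nat.mul_lt_mul_of_pos_left (by omega) hlam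
  omega

theorem IsTwoDesign.le_replication (hD : IsTwoDesign v k lam P Bs) (hr : HasReplication Bs r)
    (hlr : lam < r) (hv : 0 < v) : k ≤ r := by
  refine Nat.le_of_mul_le_mul_left ?_ hv
  calc v * k ≤ Nat.card Bs * k := Nat.mul_le_mul_right k (hD.le_card_blocks hr hlr)
    _ = v * r := hD.card_blocks_mul hr

theorem IsTwoDesign.mul_lt_replication_sq (hD : IsTwoDesign v k lam P Bs)
    (hr : HasReplication Bs r) (hlam : 0 < lam) (hk : 1 < k) (hkv : k < v) : lam * v < r ^ 2 := by
  have : Nonempty P := Nat.card_pos_iff.mp (hD.1 ▸ by omega) |>.1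
  have hrk := hD.replication_mul hr (Classical.arbitrary P)
  have hlr := hD.lt_replication hr hlam hk hkv
  have hkr := hD.le_replication hr hlr (by omega)
  have : r * (k - 1) ≤ r * (r - 1) := Nat.mul_le_mul_left r (by omega)
  calc lam * v = r * (k - 1) + lam := by
        rw [hrk, ← Nat.mul_add_one, Nat.sub_one_add_one (by omega)]
    _ < r * (r - 1) + r := by omega
    _ = r ^ 2 := by rw [← Nat.mul_add_one, Nat.sub_one_add_one (by omega), sq]

end Design

namespace Subgroup

variable {Γ : Type*} [Group Γ]

theorem relIndex_mul_card_inf (H K : Subgroup Γ) :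
    H.relIndex K * Nat.card ↥(H ⊓ K) = Nat.card K := by
  rw [← relIndex_bot_left, ← relIndex_bot_left, ← inf_relIndex_right H K, mul_comm]
  exact relIndex_mul_relIndex ⊥ (H ⊓ K) K bot_le inf_le_right

theorem relIndex_dvd_relIndex_of_normal {H K L : Subgroup Γ} [(H.subgroupOf L).Normal]
    (hKL : K ≤ L) : H.relIndex K ∣ H.relIndex L :=
  relIndex_subgroupOf (H := H) hKL ▸ relIndex_dvd_index_of_normal _ _

end Subgroup

section PermutationGroup

open MulAction Pointwise

variable {P : Type*} {Bs : Set (Set P)} {r : ℕ} {G X : Subgroup (Equiv.Perm P)}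

lemma stabilizer_subgroupOf (X : Subgroup (Equiv.Perm P)) (α : P) :
    (stabilizer (Equiv.Perm P) α).subgroupOf X = stabilizer X α := by
  ext; rfl

theorem card_eq_card_mul_card_pointStab (hX : ∀ x y : P, ∃ g ∈ X, g x = y) (α : P) :
    Nat.card X = Nat.card P * Nat.card (pointStab X α) := by
  have : IsPretransitive X P :=
    ⟨fun x y => (hX x y).elim fun g ⟨hg, hgx⟩ => ⟨⟨g, hg⟩, hgx⟩⟩
  rw [← (stabilizer (Equiv.Perm P) α).relIndex_mul_card_inf X, Subgroup.relIndex,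
    stabilizer_subgroupOf, index_stabilizer_of_transitive, pointStab, inf_comm]

theorem replication_dvd_card_pointStab (hr : HasReplication Bs r) (hr0 : r ≠ 0)
    (hGaut : IsAutomGroup G Bs) (hft : IsFlagTransitive G Bs) (α : P) :
    r ∣ Nat.card (pointStab G α) := by
  obtain ⟨⟨B₀, hB₀, hαB₀⟩⟩ : Nonempty {B | B ∈ Bs ∧ α ∈ B} :=
    (Nat.card_pos_iff.mp (hr α ▸ Nat.pos_of_ne_zero hr0)).1
  have horbit : orbit (pointStab G α) B₀ = {B | B ∈ Bs ∧ α ∈ B} := by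
    ext B
    constructor
    · rintro ⟨⟨g, hgG, hgα⟩, rfl⟩
      refine ⟨?_, α, hαB₀, hgα⟩
      show g • B₀ ∈ Bs
      exact Set.image_smul (a := g) (t := B₀) ▸ hGaut g hgG B₀ hB₀
    · rintro ⟨hB, hαB⟩
      obtain ⟨g, hgG, hgB, hgα⟩ := hft B₀ hB₀ B hB α hαB₀ α hαB
      exact ⟨⟨g, hgG, hgα⟩, (Set.image_smul).symm.trans hgB⟩
  rw [← hr α, Nat.card_coe_set_eq, ← horbit, ← index_stabilizer]
  exact Subgroup.index_dvd_card _

theorem card_pointStab_dvd_relIndex_mul (hXG : X ≤ G)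
    (hXnorm : ∀ g ∈ G, ∀ x ∈ X, g * x * g⁻¹ ∈ X) (α : P) :
    Nat.card (pointStab G α) ∣ X.relIndex G * Nat.card (pointStab X α) := by
  have : (X.subgroupOf G).Normal :=
    (Subgroup.normal_subgroupOf_iff hXG).mpr fun x g hx hg => hXnorm g hg x hx
  have hXα : pointStab X α = X ⊓ pointStab G α := by
    rw [pointStab, pointStab, ← inf_assoc, inf_of_le_left hXG]
  rw [← X.relIndex_mul_card_inf (pointStab G α), hXα]
  exact mul_dvd_mul_right (Subgroup.relIndex_dvd_relIndex_of_normal inf_le_left) _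

end PermutationGroup

namespace Nat

theorem ordProj_dvd_of_dvd_mul_of_coprime {p r a m : ℕ} (hpm : Coprime p m) (hr : r ∣ a * m) :
    ordProj[p] r ∣ a :=
  (Coprime.pow_left _ hpm).dvd_of_dvd_mul_right ((ordProj_dvd r p).trans hr)

theorem dvd_mul_ordCompl_of_ordProj_dvd {p r a m : ℕ} (hp : p.Prime) (hr0 : r ≠ 0)
    (ha : ordProj[p] r ∣ a) (hr : r ∣ a * m) : r ∣ a * ordCompl[p] m := by
  have hcompl : ordCompl[p] r ∣ a * ordCompl[p] m := by
    refine ((coprime_ordCompl hp hr0).symm.pow_right (m.factorization p)).dvd_of_dvd_mul_right ?_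
    rw [mul_assoc, mul_comm (ordCompl[p] m), ordProj_mul_ordCompl_eq_self]
    exact (ordCompl_dvd r p).trans hr
  rw [← ordProj_mul_ordCompl_eq_self r p]
  exact ((coprime_ordCompl hp hr0).pow_left _).mul_dvd_of_dvd_of_dvd
    (ha.trans (dvd_mul_right a _)) hcompl

theorem lt_mul_sq_of_mul_lt_sq_of_dvd {lam v r s : ℕ} (hv : lam * v < r ^ 2) (hr : r ∣ lam * s)
    (hs : 0 < lam * s) : v < lam * s ^ 2 := by
  have hrs : r ≤ lam * s := Nat.le_of_dvd hs hr
  have : lam * v < lam * (lam * s ^ 2) :=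
    hv.trans_le ((Nat.pow_le_pow_left hrs 2).trans_eq (by ring))
  exact Nat.lt_of_mul_lt_mul_left this

end Nat

theorem psl_socle_bounds_general (v k r : ℕ) (P : Type*) (Bs : Set (Set P))
    (hD : IsTwoDesign v k 2 P Bs) (hk : 2 < k) (hkv : k < v)
    (hr : HasReplication Bs r)
    (G X : Subgroup (Equiv.Perm P)) (hGaut : IsAutomGroup G Bs)
    (hft : IsFlagTransitive G Bs)
    (hXG : X ≤ G) (hXnorm : ∀ g ∈ G, ∀ x ∈ X, g * x * g⁻¹ ∈ X)
    (hXtrans : ∀ x y : P, ∃ g ∈ X, g x = y)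
    (n p f : ℕ) [hp : Fact p.Prime] (hf : 0 < f)
    (d : ℕ) (hd : d = Nat.gcd n (p ^ f - 1))
    (hindex : X.relIndex G ∣ 2 * d * f)
    (α : P) :
    Nat.card X < 2 * (d * f) ^ 2 * Nat.card (pointStab X α) ^ 3 ∧
    r ∣ 2 * d * f * Nat.card (pointStab X α) ∧
    (p ∣ v →
      ordProj[p] r ∣ 2 ∧
      r ∣ 2 * d * f * ordCompl[p] (Nat.card (pointStab X α)) ∧
      Nat.card X <
        2 * (d * f) ^ 2 * ordCompl[p] (Nat.card (pointStab X α)) ^ 2 *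
          Nat.card (pointStab X α)) := by
  have : Finite P := (Nat.card_pos_iff.mp (hD.1 ▸ (by omega : 0 < v))).2
  have hvr : 2 * v < r ^ 2 := hD.mul_lt_replication_sq hr two_pos (by omega) hkv
  have hr0 : r ≠ 0 := by rintro rfl; omega
  set m := Nat.card (pointStab X α)
  have hm : 0 < m := Nat.card_pos
  have hd0 : 0 < d :=
    hd ▸ Nat.gcd_pos_of_pos_right _ (Nat.sub_pos_of_lt (Nat.one_lt_pow hf.ne' hp.out.one_lt))
  have hdvd : r ∣ 2 * d * f * m :=
    (replication_dvd_card_pointStab hr hr0 hGaut hft α).trans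
      ((card_pointStab_dvd_relIndex_mul hXG hXnorm α).trans (mul_dvd_mul_right hindex m))
  have hbound : ∀ R, r ∣ 2 * d * f * R → 0 < R → Nat.card X < 2 * (d * f) ^ 2 * R ^ 2 * m := by
    intro R hR hR0
    have hv : v < 2 * (d * f * R) ^ 2 :=
      Nat.lt_mul_sq_of_mul_lt_sq_of_dvd hvr (by rwa [← mul_assoc, ← mul_assoc]) (by positivity)
    rw [card_eq_card_mul_card_pointStab hXtrans α, hD.1]
    calc v * m < 2 * (d * f * R) ^ 2 * m := Nat.mul_lt_mul_of_pos_right hv hm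
      _ = 2 * (d * f) ^ 2 * R ^ 2 * m := by ring
  refine ⟨(hbound m hdvd hm).trans_eq (by ring), hdvd, fun hpv => ?_⟩
  have hcop : p.Coprime (v - 1) :=
    ((Nat.coprime_self_sub_right (by omega)).mpr (Nat.coprime_one_right v)).coprime_dvd_left hpv
  have hproj : ordProj[p] r ∣ 2 :=
    Nat.ordProj_dvd_of_dvd_mul_of_coprime hcop ⟨k - 1, (hD.replication_mul hr α).symm⟩
  have hdvd' : r ∣ 2 * d * f * ordCompl[p] m :=
    Nat.dvd_mul_ordCompl_of_ordProj_dvd hp.out hr0 (hproj.trans (by simp [mul_assoc])) hdvd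
  exact ⟨hproj, hdvd', hbound _ hdvd' (Nat.ordCompl_pos p hm.ne')⟩

/-- Lemma 2.4 of the paper: bounds and divisibility conditions for a flag-transitive
group `G` of automorphisms of a `2`-`(v, k, 2)` design with a point-transitive normal
subgroup `X ≅ PSL(n, q)`, `q = p^f`, `d = gcd(n, q-1)`, `[G : X] ∣ 2df`. -/
theorem psl_socle_bounds (v k r : ℕ) (P : Type*) (Bs : Set (Set P))
    (hD : IsTwoDesign v k 2 P Bs) (hk : 2 < k) (hkv : k < v)
    (hr : HasReplication Bs r)
    (G X : Subgroup (Equiv.Perm P)) (hGaut : IsAutomGroup G Bs)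
    (hft : IsFlagTransitive G Bs)
    (hXG : X ≤ G) (hXnorm : ∀ g ∈ G, ∀ x ∈ X, g * x * g⁻¹ ∈ X)
    (hXtrans : ∀ x y : P, ∃ g ∈ X, g x = y)
    (n p f : ℕ) (hn : 3 ≤ n) [hp : Fact p.Prime] (hf : 0 < f)
    (hX : Nonempty (X ≃* Matrix.ProjectiveSpecialLinearGroup (Fin n) (GaloisField p f)))
    (d : ℕ) (hd : d = Nat.gcd n (p ^ f - 1))
    (hindex : X.relIndex G ∣ 2 * d * f)
    (α : P) :
    Nat.card X < 2 * (d * f) ^ 2 * Nat.card (pointStab X α) ^ 3 ∧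
    r ∣ 2 * d * f * Nat.card (pointStab X α) ∧
    (p ∣ v →
      ordProj[p] r ∣ 2 ∧
      r ∣ 2 * d * f * ordCompl[p] (Nat.card (pointStab X α)) ∧
      Nat.card X <
        2 * (d * f) ^ 2 * ordCompl[p] (Nat.card (pointStab X α)) ^ 2 *
          Nat.card (pointStab X α)) :=
  psl_socle_bounds_general v k r P Bs hD hk hkv hr G X hGaut hft hXG hXnorm hXtrans n p f (hp := hp)
    hf d hd hindex α
end

section
/- Let S = (P,L) be a nontrivial 2-(v,k,1) design (so 2 < k < v), let ℬ = { ℓ∖{α} : ℓ ∈ L, α ∈ ℓ }, and let D(S) = (P,ℬ). If G ≤ Aut(S) is flag-transitive on S and for some line ℓ ∈ L the setwise stabilizer G_ℓ induces a 2-transitive permutation group on the points of ℓ, then G is a flag-transitive and point-primitive group of automorphisms of D(S). -/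
/-- `C` is a partition of `P` into nonempty parts. -/
def IsPartitionOn (P : Type*) (C : Set (Set P)) : Prop :=
  (∀ Δ ∈ C, Δ.Nonempty) ∧ ∀ x : P, ∃! Δ : Set P, Δ ∈ C ∧ x ∈ Δ

/-- `C` is a `G`-invariant partition of the point set. -/
def IsInvariantPartition {P : Type*} (G : Subgroup (Equiv.Perm P)) (C : Set (Set P)) : Prop :=
  IsPartitionOn P C ∧ ∀ g ∈ G, ∀ Δ ∈ C, (⇑g) '' Δ ∈ C

/-- `G` is transitive on the points and preserves no nontrivial partition of the points:
every `G`-invariant partition has all parts singletons or is the one-part partition. -/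
def IsPointPrimitive {P : Type*} (G : Subgroup (Equiv.Perm P)) : Prop :=
  (∀ x y : P, ∃ g ∈ G, g x = y) ∧
  ∀ C : Set (Set P), IsInvariantPartition G C →
    (∀ Δ ∈ C, ∀ x ∈ Δ, ∀ y ∈ Δ, x = y) ∨ C = {Set.univ}

/-! `G` is `2`-transitive on points: flag-transitivity moves any two points onto `ℓ`, where
`G_ℓ` acts `2`-transitively. A flag `(ℓ \ {a}, x)` of `D(S)` is determined by the ordered pair
`(a, x)` of distinct points, `ℓ` being the line through them, so `G` is flag-transitive on `D(S)`.
A `2`-transitive group is primitive: the stabiliser of a point `x` in a part `Δ` fixes `Δ` and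
moves any other point of `Δ` to every `z ≠ x`. -/

section

variable {P : Type*}

theorem IsTwoDesign.existsUnique_block {v k : ℕ} {L : Set (Set P)}
    (hS : IsTwoDesign v k 1 P L) {x y : P} (hxy : x ≠ y) :
    ∃! m, m ∈ L ∧ x ∈ m ∧ y ∈ m := by
  obtain ⟨⟨m, hm⟩, hu⟩ := Nat.card_eq_one_iff_exists.mp (hS.2.2 x y hxy)
  exact ⟨m, hm, fun m' hm' => congrArg Subtype.val (hu ⟨m', hm'⟩)⟩

theorem IsTwoDesign.nonempty_block {v k lam : ℕ} {L : Set (Set P)}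
    (hS : IsTwoDesign v k lam P L) (hk : 0 < k) {m : Set P} (hm : m ∈ L) : m.Nonempty :=
  Set.nonempty_coe_sort.mp (Nat.card_pos_iff.mp (hS.2.1 m hm ▸ hk)).1

def IsTwoTransitive (G : Subgroup (Equiv.Perm P)) : Prop :=
  ∀ a b c d : P, a ≠ b → c ≠ d → ∃ g ∈ G, g a = c ∧ g b = d

def puncturedBlocks (L : Set (Set P)) : Set (Set P) :=
  {B | ∃ ℓ ∈ L, ∃ a ∈ ℓ, B = ℓ \ {a}}

variable {G : Subgroup (Equiv.Perm P)} {L : Set (Set P)}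

theorem IsAutomGroup.puncturedBlocks (hG : IsAutomGroup G L) :
    IsAutomGroup G (puncturedBlocks L) := by
  rintro g hg _ ⟨m, hm, a, ha, rfl⟩
  refine ⟨g '' m, hG g hg m hm, g a, Set.mem_image_of_mem _ ha, ?_⟩
  rw [Set.image_sdiff g.injective, Set.image_singleton]

theorem isTwoTransitive_of_isFlagTransitive
    (hline : ∀ x y : P, x ≠ y → ∃ m ∈ L, x ∈ m ∧ y ∈ m) (hft : IsFlagTransitive G L)
    {ℓ : Set P} (hℓ : ℓ ∈ L) {p : P} (hp : p ∈ ℓ)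
    (h2t : ∀ a ∈ ℓ, ∀ b ∈ ℓ, ∀ c ∈ ℓ, ∀ d ∈ ℓ, a ≠ b → c ≠ d →
      ∃ g ∈ G, (⇑g) '' ℓ = ℓ ∧ g a = c ∧ g b = d) :
    IsTwoTransitive G := by
  intro a b c d hab hcd
  obtain ⟨m₁, hm₁, ha, hb⟩ := hline a b hab
  obtain ⟨m₂, hm₂, hc, hd⟩ := hline c d hcd
  obtain ⟨g₁, hg₁, hg₁ℓ, -⟩ := hft m₁ hm₁ ℓ hℓ a ha p hp
  obtain ⟨g₂, hg₂, hg₂ℓ, -⟩ := hft m₂ hm₂ ℓ hℓ c hc p hp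
  have into_ℓ {g : Equiv.Perm P} {m : Set P} (hg : g '' m = ℓ) {x : P} (hx : x ∈ m) :
      g x ∈ ℓ := hg ▸ Set.mem_image_of_mem g hx
  obtain ⟨h, hh, -, hha, hhb⟩ :=
    h2t (g₁ a) (into_ℓ hg₁ℓ ha) (g₁ b) (into_ℓ hg₁ℓ hb) (g₂ c) (into_ℓ hg₂ℓ hc)
      (g₂ d) (into_ℓ hg₂ℓ hd) (g₁.injective.ne hab) (g₂.injective.ne hcd)
  refine ⟨g₂⁻¹ * h * g₁, G.mul_mem (G.mul_mem (G.inv_mem hg₂) hh) hg₁, ?_, ?_⟩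
  · simp [Equiv.Perm.mul_apply, hha]
  · simp [Equiv.Perm.mul_apply, hhb]

theorem IsTwoTransitive.isFlagTransitive_puncturedBlocks (h2 : IsTwoTransitive G)
    (hline : ∀ x y : P, x ≠ y → ∃! m, m ∈ L ∧ x ∈ m ∧ y ∈ m) (hG : IsAutomGroup G L) :
    IsFlagTransitive G (puncturedBlocks L) := by
  rintro _ ⟨m₁, hm₁, a₁, ha₁, rfl⟩ _ ⟨m₂, hm₂, a₂, ha₂, rfl⟩ x₁ ⟨hx₁, hx₁a⟩ x₂ ⟨hx₂, hx₂a⟩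
  have hax₁ : a₁ ≠ x₁ := fun h => hx₁a (h ▸ rfl)
  have hax₂ : a₂ ≠ x₂ := fun h => hx₂a (h ▸ rfl)
  obtain ⟨g, hg, hga, hgx⟩ := h2 a₁ x₁ a₂ x₂ hax₁ hax₂
  obtain ⟨m, -, hm⟩ := hline a₂ x₂ hax₂
  have hm₁m : g '' m₁ = m :=
    hm _ ⟨hG g hg m₁ hm₁, hga ▸ Set.mem_image_of_mem _ ha₁, hgx ▸ Set.mem_image_of_mem _ hx₁⟩
  have hm₂m : m₂ = m := hm _ ⟨hm₂, ha₂, hx₂⟩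
  refine ⟨g, hg, ?_, hgx⟩
  rw [Set.image_sdiff g.injective, Set.image_singleton, hm₁m, hm₂m, hga]

theorem IsTwoTransitive.exists_apply_eq (h2 : IsTwoTransitive G) (x y : P) :
    ∃ g ∈ G, g x = y := by
  by_cases h : x = y
  · exact ⟨1, G.one_mem, h⟩
  · obtain ⟨g, hg, hgx, -⟩ := h2 x y y x h (Ne.symm h)
    exact ⟨g, hg, hgx⟩

theorem IsTwoTransitive.eq_univ_of_mem_invariantPartition (h2 : IsTwoTransitive G)
    {C : Set (Set P)} (hC : IsInvariantPartition G C) {Δ : Set P} (hΔ : Δ ∈ C)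
    {x y : P} (hx : x ∈ Δ) (hy : y ∈ Δ) (hxy : x ≠ y) : Δ = Set.univ := by
  refine Set.eq_univ_of_forall fun z => ?_
  by_cases hz : z = x
  · exact hz ▸ hx
  obtain ⟨g, hg, hgx, hgy⟩ := h2 x y x z hxy (Ne.symm hz)
  obtain ⟨Δ', -, hpart⟩ := hC.1.2 x
  have hgΔ : g '' Δ = Δ := by
    rw [hpart _ ⟨hC.2 g hg Δ hΔ, hgx ▸ Set.mem_image_of_mem _ hx⟩, hpart Δ ⟨hΔ, hx⟩]
  exact hgΔ ▸ hgy ▸ Set.mem_image_of_mem _ hy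

theorem IsPartitionOn.eq_singleton_univ {C : Set (Set P)} (hC : IsPartitionOn P C)
    (hU : Set.univ ∈ C) : C = {Set.univ} := by
  refine Set.eq_singleton_iff_unique_mem.mpr ⟨hU, fun Δ hΔ => ?_⟩
  obtain ⟨w, hw⟩ := hC.1 Δ hΔ
  obtain ⟨Δ', -, hpart⟩ := hC.2 w
  rw [hpart Δ ⟨hΔ, hw⟩, hpart _ ⟨hU, Set.mem_univ w⟩]

theorem IsTwoTransitive.isPointPrimitive (h2 : IsTwoTransitive G) : IsPointPrimitive G := by
  refine ⟨h2.exists_apply_eq, fun C hC => ?_⟩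
  by_cases hs : ∀ Δ ∈ C, ∀ x ∈ Δ, ∀ y ∈ Δ, x = y
  · exact Or.inl hs
  push Not at hs
  obtain ⟨Δ, hΔ, x, hx, y, hy, hxy⟩ := hs
  exact Or.inr <| hC.1.eq_singleton_univ <|
    h2.eq_univ_of_mem_invariantPartition hC hΔ hx hy hxy ▸ hΔ

end

theorem construction_flag_transitive_general (v k : ℕ) (P : Type*) (L : Set (Set P))
    (hS : IsTwoDesign v k 1 P L) (hk : 2 < k)
    (Bs : Set (Set P)) (hBs : Bs = {B : Set P | ∃ ℓ ∈ L, ∃ a ∈ ℓ, B = ℓ \ {a}})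
    (G : Subgroup (Equiv.Perm P)) (hGaut : IsAutomGroup G L)
    (hft : IsFlagTransitive G L)
    (ℓ : Set P) (hℓ : ℓ ∈ L)
    (h2t : ∀ a ∈ ℓ, ∀ b ∈ ℓ, ∀ c ∈ ℓ, ∀ d ∈ ℓ, a ≠ b → c ≠ d →
      ∃ g ∈ G, (⇑g) '' ℓ = ℓ ∧ g a = c ∧ g b = d) :
    IsAutomGroup G Bs ∧ IsFlagTransitive G Bs ∧ IsPointPrimitive G := by
  have hline : ∀ x y : P, x ≠ y → ∃! m, m ∈ L ∧ x ∈ m ∧ y ∈ m :=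
    fun _ _ => hS.existsUnique_block
  obtain ⟨p, hp⟩ := hS.nonempty_block (by omega) hℓ
  have h2 : IsTwoTransitive G := isTwoTransitive_of_isFlagTransitive
    (fun x y hxy => (hline x y hxy).exists) hft hℓ hp h2t
  subst hBs
  exact ⟨hGaut.puncturedBlocks, h2.isFlagTransitive_puncturedBlocks hline hGaut,
    h2.isPointPrimitive⟩

/-- If `G` is a flag-transitive group of automorphisms of a nontrivial
`2`-`(v, k, 1)` design `S = (P, L)` and for some line `ℓ` the setwise stabilizer
`G_ℓ` induces a `2`-transitive group on `ℓ`, then `G` is a flag-transitive and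
point-primitive group of automorphisms of the design `D(S)` of Construction 1.2. -/
theorem construction_flag_transitive (v k : ℕ) (P : Type*) (L : Set (Set P))
    (hS : IsTwoDesign v k 1 P L) (hk : 2 < k) (hkv : k < v)
    (Bs : Set (Set P)) (hBs : Bs = {B : Set P | ∃ ℓ ∈ L, ∃ a ∈ ℓ, B = ℓ \ {a}})
    (G : Subgroup (Equiv.Perm P)) (hGaut : IsAutomGroup G L)
    (hft : IsFlagTransitive G L)
    (ℓ : Set P) (hℓ : ℓ ∈ L)
    (h2t : ∀ a ∈ ℓ, ∀ b ∈ ℓ, ∀ c ∈ ℓ, ∀ d ∈ ℓ, a ≠ b → c ≠ d →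
      ∃ g ∈ G, (⇑g) '' ℓ = ℓ ∧ g a = c ∧ g b = d) :
    IsAutomGroup G Bs ∧ IsFlagTransitive G Bs ∧ IsPointPrimitive G :=
  construction_flag_transitive_general v k P L hS hk Bs hBs G hGaut hft ℓ hℓ h2t
end
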